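/- Let phi_n(a,b) = sum_{k=0}^n [n choose k]_q * (-b)^k q^{binom(k,2)} / (1 - a q^{n-k}), where [n choose k]_q is the Gaussian binomial coefficient. Then for n ≥ 1, phi_n(a,b) = phi_{n-1}(aq, bq) - b * phi_{n-1}(a, bq). -/

import Mathlib

open Finset

/-- The q-Pochhammer symbol `(a; q)_n = ∏_{j=0}^{n-1} (1 - a q^j)`. -/
noncomputable def qPoch (a q : ℂ) (n : ℕ) : ℂ := ∏ j ∈ Finset.range n, (1 - a * q ^ j)

/-- The Gaussian binomial coefficient `[n choose k]_q = (q;q)_n / ((q;q)_k (q;q)_{n-k})`. -/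
noncomputable def qBinom (q : ℂ) (n k : ℕ) : ℂ :=
  qPoch q q n / (qPoch q q k * qPoch q q (n - k))

/-- `φ_n(a,b) = ∑_{k=0}^n [n choose k]_q (-b)^k q^{C(k,2)} / (1 - a q^{n-k})`. -/
noncomputable def phi (q a b : ℂ) (n : ℕ) : ℂ :=
  ∑ k ∈ range (n + 1), qBinom q n k * (-b) ^ k * q ^ (k.choose 2) / (1 - a * q ^ (n - k))

/-! Each term of `φ_{n+1}(a,b)` splits by the q-Pascal rule
`[n+1, k+1] = q^{k+1} [n, k+1] + [n, k]`; the first parts absorb the factor `q^{k+1}` into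
`(-bq)^{k+1}` and `aq · q^{n-k-1}` and sum to `φ_n(aq, bq)`, the second parts use
`C(k+1, 2) = C(k, 2) + k` to give `-b (-bq)^k q^{C(k,2)}` and sum to `-b φ_n(a, bq)`.
The end terms `k = 0` and `k = n + 1` belong to only one of the two sums. -/

@[simp]
lemma qPoch_zero (a q : ℂ) : qPoch a q 0 = 1 := by
  simp [qPoch]

lemma qPoch_succ (a q : ℂ) (n : ℕ) : qPoch a q (n + 1) = qPoch a q n * (1 - a * q ^ n) :=
  prod_range_succ _ n

lemma qPoch_ne_zero_of_le {a q : ℂ} {m n : ℕ} (h : qPoch a q n ≠ 0) (hmn : m ≤ n) :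
    qPoch a q m ≠ 0 := by
  induction n, hmn using Nat.le_induction with
  | base => exact h
  | succ n _ ih => exact ih (left_ne_zero_of_mul (qPoch_succ a q n ▸ h))

lemma qPoch_self_ne_zero_of_norm_lt_one {q : ℂ} (hq : ‖q‖ < 1) (n : ℕ) : qPoch q q n ≠ 0 := by
  refine prod_ne_zero_iff.mpr fun j _ h => ?_
  have hnorm : ‖q‖ ^ (j + 1) = 1 := by
    rw [← norm_pow, pow_succ', ← sub_eq_zero.mp h, norm_one]
  exact (pow_lt_one₀ (norm_nonneg q) hq j.succ_ne_zero).ne hnorm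

lemma qBinom_zero_right {q : ℂ} {n : ℕ} (h : qPoch q q n ≠ 0) : qBinom q n 0 = 1 := by
  simp [qBinom, h]

lemma qBinom_self {q : ℂ} {n : ℕ} (h : qPoch q q n ≠ 0) : qBinom q n n = 1 := by
  simp [qBinom, h]

lemma qBinom_succ_succ {q : ℂ} {n k : ℕ} (h : qPoch q q n ≠ 0) (hk : k < n) :
    qBinom q (n + 1) (k + 1) = q ^ (k + 1) * qBinom q n (k + 1) + qBinom q n k := by
  obtain ⟨r, rfl⟩ : ∃ r, n = k + r + 1 := ⟨n - k - 1, by omega⟩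
  have hk1 := qPoch_ne_zero_of_le h (show k + 1 ≤ k + r + 1 by omega)
  have hr1 := qPoch_ne_zero_of_le h (show r + 1 ≤ k + r + 1 by omega)
  rw [qPoch_succ] at hk1 hr1
  obtain ⟨hk, hk'⟩ := mul_ne_zero_iff.mp hk1
  obtain ⟨hr, hr'⟩ := mul_ne_zero_iff.mp hr1
  simp only [qBinom, show k + r + 1 + 1 - (k + 1) = r + 1 by omega,
    show k + r + 1 - (k + 1) = r by omega, show k + r + 1 - k = r + 1 by omega,
    qPoch_succ q q (k + r + 1), qPoch_succ q q k, qPoch_succ q q r]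
  field_simp
  ring

noncomputable def phiTerm (q a b : ℂ) (n k : ℕ) : ℂ :=
  qBinom q n k * (-b) ^ k * q ^ (k.choose 2) / (1 - a * q ^ (n - k))

lemma phi_eq_sum_phiTerm (q a b : ℂ) (n : ℕ) :
    phi q a b n = ∑ k ∈ range (n + 1), phiTerm q a b n k :=
  rfl

lemma phiTerm_succ_zero {q : ℂ} {n : ℕ} (h : qPoch q q (n + 1) ≠ 0) (a b : ℂ) :
    phiTerm q a b (n + 1) 0 = phiTerm q (a * q) (b * q) n 0 := by
  simp only [phiTerm, qBinom_zero_right h, qBinom_zero_right (qPoch_ne_zero_of_le h n.le_succ),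
    Nat.sub_zero, pow_zero, pow_succ', mul_assoc]

lemma phiTerm_succ_self {q : ℂ} {n : ℕ} (h : qPoch q q (n + 1) ≠ 0) (a b : ℂ) :
    phiTerm q a b (n + 1) (n + 1) = -b * phiTerm q a (b * q) n n := by
  simp only [phiTerm, qBinom_self h, qBinom_self (qPoch_ne_zero_of_le h n.le_succ),
    Nat.sub_self, Nat.choose_succ_succ', Nat.choose_one_right]
  ring

lemma phiTerm_succ_succ {q : ℂ} {n k : ℕ} (h : qPoch q q n ≠ 0) (hk : k < n) (a b : ℂ) :
    phiTerm q a b (n + 1) (k + 1)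
      = phiTerm q (a * q) (b * q) n (k + 1) - b * phiTerm q a (b * q) n k := by
  obtain ⟨r, rfl⟩ : ∃ r, n = k + r + 1 := ⟨n - k - 1, by omega⟩
  simp only [phiTerm, qBinom_succ_succ h hk, show k + r + 1 + 1 - (k + 1) = r + 1 by omega,
    show k + r + 1 - (k + 1) = r by omega, show k + r + 1 - k = r + 1 by omega,
    Nat.choose_succ_succ', Nat.choose_one_right]
  ring

theorem phi_succ {q : ℂ} {n : ℕ} (h : qPoch q q (n + 1) ≠ 0) (a b : ℂ) :
    phi q a b (n + 1) = phi q (a * q) (b * q) n - b * phi q a (b * q) n := by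
  have h' := qPoch_ne_zero_of_le h n.le_succ
  simp only [phi_eq_sum_phiTerm]
  rw [sum_range_succ, sum_range_succ', sum_range_succ' _ n, sum_range_succ _ n, mul_add, mul_sum,
    phiTerm_succ_zero h, phiTerm_succ_self h,
    sum_congr rfl fun k hk => phiTerm_succ_succ h' (mem_range.mp hk) a b, sum_sub_distrib]
  ring

theorem phi_recurrence_general (n : ℕ) (hn : 1 ≤ n) (a b q : ℂ) (hq : ‖q‖ < 1) :
    phi q a b n = phi q (a * q) (b * q) (n - 1) - b * phi q a (b * q) (n - 1) := by
  obtain ⟨m, rfl⟩ : ∃ m, n = m + 1 := ⟨n - 1, by omega⟩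
  exact phi_succ (qPoch_self_ne_zero_of_norm_lt_one hq _) a b

/-- The recurrence `φ_n(a,b) = φ_{n-1}(aq, bq) - b φ_{n-1}(a, bq)` for `n ≥ 1`. -/
theorem phi_recurrence (n : ℕ) (hn : 1 ≤ n) (a b q : ℂ) (hq : ‖q‖ < 1)
    (ha : ∀ j ≤ n, a * q ^ j ≠ 1) :
    phi q a b n = phi q (a * q) (b * q) (n - 1) - b * phi q a (b * q) (n - 1) :=
  phi_recurrence_general n hn a b q hq
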